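/- Let a < b, let (ε_j) be a sequence of positive reals converging to 0, and let v_j : ℝ → ℝ be twice continuously differentiable functions such that sup_j ∫ₐᵇ ( (v_j(t)−1)²/ε_j + ε_j³·(v_j''(t))² ) dt < ∞. Then ε_j·∫ₐᵇ |v_j'(t)| dt → 0 as j → ∞. -/

import Mathlib

open Filter

/-!
On an interval of length `h`, pick points in its outer thirds where `|f - c|` is below its
average; the mean value theorem between them gives a point where `|f'| ≤ 18 h⁻² ∫ |f - c|`, and
`∫ |f''|` controls the variation of `f'` from there. Summing over a partition into pieces of length
at most `h` yields `∫ |f'| ≤ (36 / h) ∫ |f - c| + h ∫ |f''|`. For `h = ε` this reads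
`ε ∫ |v'| ≤ ∫ (36 |v - 1| + ε² |v''|)`, and AM–GM bounds the integrand by `√ε` times the
Modica–Mortola energy density plus a constant, so `ε ∫ |v'| = O(√ε)`.
-/

open MeasureTheory intervalIntegral Set
open scoped Interval

theorem exists_mem_Icc_mul_le_integral {w : ℝ → ℝ} {p q : ℝ} (hw : ContinuousOn w (Icc p q))
    (hpq : p ≤ q) : ∃ c ∈ Icc p q, w c * (q - p) ≤ ∫ t in p..q, w t := by
  obtain ⟨c, hc, hmin⟩ := isCompact_Icc.exists_isMinOn (nonempty_Icc.2 hpq) hw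
  refine ⟨c, hc, ?_⟩
  have := integral_mono_on (μ := volume) hpq intervalIntegrable_const
    (hw.intervalIntegrable_of_Icc hpq) fun t ht => hmin ht
  simpa [mul_comm] using this

theorem abs_integral_le_integral_abs_of_mem_Icc {g : ℝ → ℝ} {p s ξ t : ℝ}
    (hg : IntervalIntegrable g volume p s) (hξ : ξ ∈ Icc p s) (ht : t ∈ Icc p s) :
    |∫ u in ξ..t, g u| ≤ ∫ u in p..s, |g u| := by
  have hps : p ≤ s := hξ.1.trans hξ.2
  have hsub : Ι ξ t ⊆ Ioc p s := by
    rw [uIoc]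
    exact Ioc_subset_Ioc (le_min hξ.1 ht.1) (max_le hξ.2 ht.2)
  calc |∫ u in ξ..t, g u| ≤ ∫ u in Ι ξ t, |g u| := by
        simpa only [Real.norm_eq_abs] using
          norm_integral_le_integral_norm_uIoc (f := g) (μ := volume)
    _ ≤ ∫ u in Ioc p s, |g u| :=
      setIntegral_mono_set hg.abs.1 (.of_forall fun _ => abs_nonneg _) hsub.eventuallyLE
    _ = ∫ u in p..s, |g u| := (integral_of_le hps).symm

theorem exists_mem_Icc_abs_deriv_le {f : ℝ → ℝ} (hf : Differentiable ℝ f) {p s : ℝ} (hps : p < s)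
    (c : ℝ) : ∃ ξ ∈ Icc p s, |deriv f ξ| ≤ 18 / (s - p) ^ 2 * ∫ t in p..s, |f t - c| := by
  set W := ∫ t in p..s, |f t - c|
  set h := (s - p) / 3 with h_def
  have hh : 0 < h := by positivity
  have hW : 0 ≤ W := integral_nonneg hps.le fun _ _ => abs_nonneg _
  have hcont : Continuous fun t => |f t - c| := (hf.continuous.sub continuous_const).abs
  have hsmall : ∀ q r, p ≤ q → q ≤ r → r ≤ s → ∃ x ∈ Icc q r, |f x - c| * (r - q) ≤ W := by
    intro q r hpq hqr hrs
    obtain ⟨x, hx, hxW⟩ := exists_mem_Icc_mul_le_integral hcont.continuousOn hqr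
    exact ⟨x, hx, hxW.trans <| integral_mono_interval hpq hqr hrs
      (.of_forall fun _ => abs_nonneg _) (hcont.intervalIntegrable p s)⟩
  obtain ⟨x, hx, hxW⟩ := hsmall p (p + h) le_rfl (by linarith) (by linarith)
  obtain ⟨y, hy, hyW⟩ := hsmall (s - h) s (by linarith) (by linarith) le_rfl
  have hxy : h ≤ y - x := by linarith [hx.2, hy.1]
  obtain ⟨ξ, hξ, hξ_eq⟩ :=
    exists_deriv_eq_slope f (show x < y by linarith) hf.continuous.continuousOn hf.differentiableOn
  refine ⟨ξ, ⟨by linarith [hx.1, hξ.1], by linarith [hy.2, hξ.2]⟩, ?_⟩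
  have hnum : |f y - f x| ≤ 2 * W / h := by
    calc |f y - f x| ≤ |f y - c| + |f x - c| := by
          simpa only [abs_sub_comm c] using abs_sub_le (f y) c (f x)
      _ ≤ W / h + W / h := by
        gcongr
        · rw [le_div_iff₀ hh]; simpa using hyW
        · rw [le_div_iff₀ hh]; simpa using hxW
      _ = 2 * W / h := by ring
  calc |deriv f ξ| = |f y - f x| / (y - x) := by
        rw [hξ_eq, abs_div, abs_of_pos (show 0 < y - x by linarith)]
    _ ≤ 2 * W / h / h := div_le_div₀ (by positivity) hnum hh hxy
    _ = 18 / (s - p) ^ 2 * W := by rw [h_def]; field_simp; ring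

theorem integral_abs_deriv_le {f : ℝ → ℝ} (hf : ContDiff ℝ 2 f) {p s : ℝ} (hps : p < s) (c : ℝ) :
    ∫ t in p..s, |deriv f t| ≤
      18 / (s - p) * (∫ t in p..s, |f t - c|) + (s - p) * ∫ t in p..s, |deriv (deriv f) t| := by
  set W := ∫ t in p..s, |f t - c|
  set V := ∫ t in p..s, |deriv (deriv f) t|
  have hf'' : Continuous (deriv (deriv f)) := (hf.deriv' (n := 1)).continuous_deriv_one
  obtain ⟨ξ, hξ, hξW⟩ := exists_mem_Icc_abs_deriv_le (hf.differentiable (by norm_num)) hps c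
  have hpt : ∀ t ∈ Icc p s, |deriv f t| ≤ 18 / (s - p) ^ 2 * W + V := by
    intro t ht
    have hftc : deriv f t - deriv f ξ = ∫ u in ξ..t, deriv (deriv f) u :=
      (integral_deriv_eq_sub (fun x _ => hf.differentiable_deriv_two x)
        (hf''.intervalIntegrable ξ t)).symm
    have hV : |deriv f t - deriv f ξ| ≤ V := hftc ▸
      abs_integral_le_integral_abs_of_mem_Icc (hf''.intervalIntegrable p s) hξ ht
    linarith [abs_sub_abs_le_abs_sub (deriv f t) (deriv f ξ)]
  calc ∫ t in p..s, |deriv f t| ≤ ∫ _ in p..s, (18 / (s - p) ^ 2 * W + V) :=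
        integral_mono_on hps.le ((hf.continuous_deriv (by norm_num)).abs.intervalIntegrable p s)
          intervalIntegrable_const hpt
    _ = 18 / (s - p) * W + (s - p) * V := by
        have : s - p ≠ 0 := (sub_pos.2 hps).ne'
        rw [intervalIntegral.integral_const, smul_eq_mul]
        field_simp

theorem integral_abs_deriv_le_nat_mul {f : ℝ → ℝ} (hf : ContDiff ℝ 2 f) {a b : ℝ} (hab : a < b)
    (c : ℝ) {M : ℕ} (hM : 0 < M) :
    ∫ t in a..b, |deriv f t| ≤
      18 * M / (b - a) * (∫ t in a..b, |f t - c|)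
        + (b - a) / M * ∫ t in a..b, |deriv (deriv f) t| := by
  set H := (b - a) / M with H_def
  have hH : 0 < H := div_pos (sub_pos.2 hab) (Nat.cast_pos.2 hM)
  set x : ℕ → ℝ := fun k => a + k * H
  have hstep : ∀ k, x (k + 1) - x k = H := fun k => by simp only [x]; push_cast; ring
  have hsum : ∀ g : ℝ → ℝ, Continuous g →
      ∑ k ∈ Finset.range M, ∫ t in x k..x (k + 1), g t = ∫ t in a..b, g t := by
    intro g hg
    have hxM : x M = b := by simp only [x, H_def]; field_simp; ring
    rw [sum_integral_adjacent_intervals fun k _ => hg.intervalIntegrable _ _, hxM]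
    simp [x]
  have hf0 : Continuous f := hf.continuous
  have hf1 : Continuous (deriv f) := hf.continuous_deriv (by norm_num)
  have hf2 : Continuous (deriv (deriv f)) := (hf.deriv' (n := 1)).continuous_deriv_one
  calc ∫ t in a..b, |deriv f t|
      = ∑ k ∈ Finset.range M, ∫ t in x k..x (k + 1), |deriv f t| :=
        (hsum (fun t => |deriv f t|) (by fun_prop)).symm
    _ ≤ ∑ k ∈ Finset.range M, (18 / H * (∫ t in x k..x (k + 1), |f t - c|)
          + H * ∫ t in x k..x (k + 1), |deriv (deriv f) t|) := by
        refine Finset.sum_le_sum fun k _ => ?_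
        have hlt : x k < x (k + 1) := by linarith [hstep k]
        simpa only [hstep] using integral_abs_deriv_le hf hlt c
    _ = 18 / H * (∫ t in a..b, |f t - c|) + H * ∫ t in a..b, |deriv (deriv f) t| := by
        rw [Finset.sum_add_distrib, ← Finset.mul_sum, ← Finset.mul_sum,
          hsum (fun t => |f t - c|) (by fun_prop),
          hsum (fun t => |deriv (deriv f) t|) (by fun_prop)]
    _ = 18 * M / (b - a) * (∫ t in a..b, |f t - c|)
          + (b - a) / M * ∫ t in a..b, |deriv (deriv f) t| := by
        rw [H_def, div_div_eq_mul_div]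

theorem integral_abs_deriv_le_div_add_mul {f : ℝ → ℝ} (hf : ContDiff ℝ 2 f) {a b h : ℝ} (c : ℝ)
    (hh : 0 < h) (hhab : h ≤ b - a) :
    ∫ t in a..b, |deriv f t| ≤
      36 / h * (∫ t in a..b, |f t - c|) + h * ∫ t in a..b, |deriv (deriv f) t| := by
  have hab : a < b := by linarith
  have hL : 0 < b - a := by linarith
  set M := ⌈(b - a) / h⌉₊
  have hM : 0 < M := Nat.ceil_pos.2 (by positivity)
  have hMpos : (0 : ℝ) < M := Nat.cast_pos.2 hM
  have hM_ge : (b - a) / h ≤ M := Nat.le_ceil _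
  have hM_lt : (M : ℝ) < (b - a) / h + 1 := Nat.ceil_lt_add_one (by positivity)
  have hMh : (M : ℝ) * h < b - a + h := by
    simpa only [add_mul, div_mul_cancel₀ _ hh.ne', one_mul] using mul_lt_mul_of_pos_right hM_lt hh
  have hcoarse : 18 * M / (b - a) ≤ 36 / h := by
    rw [div_le_div_iff₀ hL hh]
    linarith
  have hfine : (b - a) / M ≤ h := by
    rw [div_le_iff₀ hMpos]
    rwa [div_le_iff₀ hh, mul_comm] at hM_ge
  refine (integral_abs_deriv_le_nat_mul hf hab c hM).trans (add_le_add ?_ ?_) <;>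
    gcongr <;> exact integral_nonneg hab.le fun _ _ => abs_nonneg _

theorem abs_add_sq_mul_abs_le {e : ℝ} (he : 0 < e) (x y : ℝ) :
    36 * |x| + e ^ 2 * |y| ≤ 18 * √e * (x ^ 2 / e + e ^ 3 * y ^ 2 + 2) := by
  obtain ⟨s, hs, rfl⟩ : ∃ s, 0 < s ∧ s ^ 2 = e := ⟨√e, Real.sqrt_pos.2 he, Real.sq_sqrt he.le⟩
  rw [Real.sqrt_sq hs.le]
  have hx : 2 * s * |x| ≤ x ^ 2 + s ^ 2 := by nlinarith [sq_nonneg (|x| - s), sq_abs x]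
  have hy : 2 * s ^ 3 * |y| ≤ s ^ 6 * y ^ 2 + 1 := by
    have hsq : (s ^ 3 * |y|) ^ 2 = s ^ 6 * y ^ 2 := by rw [mul_pow, sq_abs]; ring
    nlinarith [sq_nonneg (s ^ 3 * |y| - 1)]
  have key : 18 * s * (x ^ 2 / s ^ 2 + (s ^ 2) ^ 3 * y ^ 2 + 2)
      = 18 * (x ^ 2 + s ^ 2) / s + 18 * s * (s ^ 6 * y ^ 2 + 1) := by
    field_simp; ring
  rw [key]
  have h1 : 36 * |x| ≤ 18 * (x ^ 2 + s ^ 2) / s := by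
    rw [le_div_iff₀ hs]; linarith
  have h2 : (s ^ 2) ^ 2 * |y| ≤ 18 * s * (s ^ 6 * y ^ 2 + 1) := by
    nlinarith [mul_le_mul_of_nonneg_left hy hs.le, sq_nonneg (s ^ 3 * y)]
  linarith

theorem mul_integral_abs_deriv_le_sqrt_mul_energy {f : ℝ → ℝ} (hf : ContDiff ℝ 2 f) {a b e : ℝ}
    (c : ℝ) (he : 0 < e) (heab : e ≤ b - a) :
    e * ∫ t in a..b, |deriv f t| ≤
      18 * √e * ((∫ t in a..b, ((f t - c) ^ 2 / e + e ^ 3 * deriv (deriv f) t ^ 2))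
        + 2 * (b - a)) := by
  have hab : a ≤ b := by linarith
  have hf0 : Continuous f := hf.continuous
  have hf2 : Continuous (deriv (deriv f)) := (hf.deriv' (n := 1)).continuous_deriv_one
  have hint : ∀ g : ℝ → ℝ, Continuous g → IntervalIntegrable g volume a b :=
    fun g hg => hg.intervalIntegrable a b
  calc e * ∫ t in a..b, |deriv f t|
      ≤ e * (36 / e * (∫ t in a..b, |f t - c|) + e * ∫ t in a..b, |deriv (deriv f) t|) :=
        mul_le_mul_of_nonneg_left (integral_abs_deriv_le_div_add_mul hf c he heab) he.le
    _ = ∫ t in a..b, (36 * |f t - c| + e ^ 2 * |deriv (deriv f) t|) := by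
        rw [intervalIntegral.integral_add (hint _ (by fun_prop)) (hint _ (by fun_prop)),
          intervalIntegral.integral_const_mul, intervalIntegral.integral_const_mul]
        field_simp
    _ ≤ ∫ t in a..b, 18 * √e * ((f t - c) ^ 2 / e + e ^ 3 * deriv (deriv f) t ^ 2 + 2) :=
        integral_mono_on hab (hint _ (by fun_prop)) (hint _ (by fun_prop))
          fun t _ => abs_add_sq_mul_abs_le he _ _
    _ = 18 * √e * ((∫ t in a..b, ((f t - c) ^ 2 / e + e ^ 3 * deriv (deriv f) t ^ 2))
          + 2 * (b - a)) := by
        rw [intervalIntegral.integral_const_mul,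
          intervalIntegral.integral_add (hint _ (by fun_prop)) intervalIntegrable_const,
          intervalIntegral.integral_const, smul_eq_mul, mul_comm (b - a)]

theorem eps_deriv_tendsto_zero (a b : ℝ) (hab : a < b)
    (ε : ℕ → ℝ) (hε : ∀ j, 0 < ε j) (hε0 : Tendsto ε atTop (nhds 0))
    (v : ℕ → ℝ → ℝ) (hv : ∀ j, ContDiff ℝ 2 (v j))
    (C : ℝ)
    (hbd : ∀ j,
      (∫ t in a..b,
        ((v j t - 1) ^ 2 / ε j + (ε j) ^ 3 * (deriv (deriv (v j)) t) ^ 2)) ≤ C) :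
    Tendsto (fun j => ε j * ∫ t in a..b, |deriv (v j) t|) atTop (nhds 0) := by
  have hsmall : ∀ᶠ j in atTop, ε j ≤ b - a := hε0.eventually (ge_mem_nhds (sub_pos.2 hab))
  have hbound : Tendsto (fun j => 18 * √(ε j) * (C + 2 * (b - a))) atTop (nhds 0) := by
    have hsqrt : Tendsto (fun j => √(ε j)) atTop (nhds 0) := by
      simpa using hε0.sqrt
    simpa using (hsqrt.const_mul 18).mul_const (C + 2 * (b - a))
  refine squeeze_zero' (.of_forall fun j => ?_) (hsmall.mono fun j hj => ?_) hbound
  · exact mul_nonneg (hε j).le (integral_nonneg hab.le fun _ _ => abs_nonneg _)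
  · refine (mul_integral_abs_deriv_le_sqrt_mul_energy (hv j) 1 (hε j) hj).trans ?_
    gcongr
    exact hbd j
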